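/- arXiv:2301.08207 — 2 statements merged into one kernel-verified Lean document; each statement's English description precedes it below -/
import Mathlib

section
/- Let G be a stabilizer group of rank k on a finite qubit index set I with N_A = |I|, and let ρ = 2^{-N_A}·Σ_{g∈G} g be its stabilizer density matrix. Then Tr(ρ) = 1, ρ² = 2^{k−N_A}·ρ, and consequently Tr(ρ^n) = 2^{(1−n)(N_A−k)} for every natural number n ≥ 1; that is, all Rényi entanglement entropies of a stabilizer state equal N_A − k (in bits). -/
open scoped ComplexOrder Matrix

noncomputable section

/-- The single-qubit Pauli matrices `σ⁰, σˣ, σʸ, σᶻ`. -/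
def pauli : Fin 4 → Matrix (Fin 2) (Fin 2) ℂ :=
  ![1, !![0, 1; 1, 0], !![0, -Complex.I; Complex.I, 0], !![1, 0; 0, -1]]

variable {I : Type} [Fintype I] [DecidableEq I]

/-- The sign-free tensor product `⨂_{i ∈ I} σ^{a(i)}` of single-qubit Pauli matrices. -/
def pauliTensor (a : I → Fin 4) : Matrix (I → Fin 2) (I → Fin 2) ℂ :=
  fun c c' => ∏ i, pauli (a i) (c i) (c' i)

/-- A Pauli operator on `I`: `ε·⨂ᵢ σ^{a(i)}` with `ε ∈ {1,−1}`. -/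
def IsPauli (M : Matrix (I → Fin 2) (I → Fin 2) ℂ) : Prop :=
  ∃ (ε : ℂ) (a : I → Fin 4), (ε = 1 ∨ ε = -1) ∧ M = ε • pauliTensor a

/-- A stabilizer group on `I`: a finite abelian group of Pauli operators under matrix
multiplication not containing `-1`; every element is Hermitian and squares to the
identity. -/
structure StabilizerGroup (I : Type) [Fintype I] [DecidableEq I] where
  carrier : Finset (Matrix (I → Fin 2) (I → Fin 2) ℂ)
  isPauli : ∀ g ∈ carrier, IsPauli g
  one_mem : (1 : Matrix (I → Fin 2) (I → Fin 2) ℂ) ∈ carrier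
  mul_mem : ∀ g ∈ carrier, ∀ h ∈ carrier, g * h ∈ carrier
  mul_comm : ∀ g ∈ carrier, ∀ h ∈ carrier, g * h = h * g
  neg_one_not_mem : (-1 : Matrix (I → Fin 2) (I → Fin 2) ℂ) ∉ carrier
  hermitian : ∀ g ∈ carrier, g.IsHermitian
  sq_eq_one : ∀ g ∈ carrier, g * g = 1

/-- The stabilizer density matrix `ρ = 2^{−N_A}·Σ_{g ∈ G} g`. -/
def stabDensity (G : StabilizerGroup I) : Matrix (I → Fin 2) (I → Fin 2) ℂ :=
  ((2 : ℂ) ^ (Fintype.card I))⁻¹ • ∑ g ∈ G.carrier, g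

end

section Aux

variable {I : Type} [Fintype I] [DecidableEq I]

lemma pauli_trace_zero : (pauli 0).trace = 2 := by
  rw [show pauli 0 = 1 from rfl, Matrix.trace_one]
  simp

lemma pauli_trace_ne_zero (a : Fin 4) (ha : a ≠ 0) : (pauli a).trace = 0 := by
  fin_cases a
  · exact absurd rfl ha
  · simp [pauli, Matrix.trace_fin_two_of]
  · simp [pauli, Matrix.trace_fin_two_of]
  · simp [pauli, Matrix.trace_fin_two_of]

lemma pauliTensor_trace (a : I → Fin 4) :
    (pauliTensor a).trace = ∏ i, (pauli (a i)).trace := by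
  unfold pauliTensor Matrix.trace Matrix.diag
  rw [Finset.prod_univ_sum]
  rfl

lemma pauliTensor_zero : (pauliTensor (fun _ : I => 0) : Matrix (I → Fin 2) (I → Fin 2) ℂ) = 1 := by
  funext c c'
  simp only [pauliTensor, Matrix.one_apply]
  by_cases h : c = c'
  · subst h
    simp [pauli, Matrix.one_apply]
  · obtain ⟨i, hi⟩ := Function.ne_iff.mp h
    rw [if_neg h]
    exact Finset.prod_eq_zero (Finset.mem_univ i) (by simp [pauli, Matrix.one_apply, hi])

lemma trace_of_mem_ne_one (G : StabilizerGroup I) {g : Matrix (I → Fin 2) (I → Fin 2) ℂ}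
    (hg : g ∈ G.carrier) (hne : g ≠ 1) : g.trace = 0 := by
  obtain ⟨ε, a, hε, rfl⟩ := G.isPauli g hg
  by_cases ha : ∀ i, a i = 0
  · have haz : a = fun _ => 0 := funext ha
    rw [haz, pauliTensor_zero] at hne hg ⊢
    rcases hε with h1 | h1
    · exact absurd (by rw [h1, one_smul]) hne
    · exact absurd (by rw [h1] at hg; simpa using hg) G.neg_one_not_mem
  · push_neg at ha
    obtain ⟨i, hi⟩ := ha
    rw [Matrix.trace_smul, pauliTensor_trace,
      Finset.prod_eq_zero (Finset.mem_univ i) (pauli_trace_ne_zero _ hi)]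
    simp

lemma sum_trace (G : StabilizerGroup I) :
    (∑ g ∈ G.carrier, g).trace = (2 : ℂ) ^ (Fintype.card I) := by
  rw [Matrix.trace_sum, Finset.sum_eq_single_of_mem 1 G.one_mem
    (fun g hg hne => trace_of_mem_ne_one G hg hne)]
  rw [Matrix.trace_one]
  simp [Fintype.card_fun]

lemma sum_mul_sum_eq (G : StabilizerGroup I) :
    (∑ g ∈ G.carrier, g) * (∑ g ∈ G.carrier, g) = (G.carrier.card : ℂ) • ∑ g ∈ G.carrier, g := by
  have key : ∀ g ∈ G.carrier, g * (∑ h ∈ G.carrier, h) = ∑ h ∈ G.carrier, h := by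
    intro g hg
    rw [Finset.mul_sum]
    exact Finset.sum_nbij' (fun h => g * h) (fun h => g * h)
      (fun h hh => G.mul_mem g hg h hh) (fun h hh => G.mul_mem g hg h hh)
      (fun h _ => show g * (g * h) = h by rw [← mul_assoc, G.sq_eq_one g hg, one_mul])
      (fun h _ => show g * (g * h) = h by rw [← mul_assoc, G.sq_eq_one g hg, one_mul])
      (fun h _ => rfl)
  rw [Finset.sum_mul, Finset.sum_congr rfl key, Finset.sum_const]
  exact (Nat.cast_smul_eq_nsmul ℂ _ _).symm

end Aux

/-- For a stabilizer group of rank `k` on `I` with `N_A = |I|`: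
`Tr(ρ) = 1`, `ρ² = 2^{k−N_A}·ρ`, and `Tr(ρ^n) = 2^{(1−n)(N_A−k)}` for all `n ≥ 1`;
i.e. all Rényi entanglement entropies of a stabilizer state equal `N_A − k`. -/
theorem stabDensity_trace_pow {I : Type} [Fintype I] [DecidableEq I]
    (G : StabilizerGroup I) (k : ℕ) (hk : G.carrier.card = 2 ^ k) :
    (stabDensity G).trace = 1 ∧
    stabDensity G * stabDensity G =
      (2 : ℂ) ^ ((k : ℤ) - (Fintype.card I : ℤ)) • stabDensity G ∧
    ∀ n : ℕ, 1 ≤ n →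
      ((stabDensity G) ^ n).trace =
        (2 : ℂ) ^ ((1 - (n : ℤ)) * ((Fintype.card I : ℤ) - (k : ℤ))) := by

  classical
  set N := Fintype.card I with hN
  have htr : (stabDensity G).trace = 1 := by
    simp only [stabDensity]
    rw [Matrix.trace_smul, sum_trace G]
    simp [N]
  have hsq : stabDensity G * stabDensity G =
      (2 : ℂ) ^ ((k : ℤ) - (N : ℤ)) • stabDensity G := by
    simp only [stabDensity]
    rw [Matrix.smul_mul, Matrix.mul_smul, sum_mul_sum_eq G, hk]
    rw [smul_smul, smul_smul, smul_smul]
    congr 1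
    push_cast
    rw [zpow_sub₀ (by norm_num : (2:ℂ) ≠ 0)]
    simp [zpow_natCast]
    ring
  refine ⟨htr, hsq, ?_⟩
  have hpow : ∀ m : ℕ, (stabDensity G) ^ (m + 1) =
      ((2 : ℂ) ^ ((k : ℤ) - (N : ℤ))) ^ m • stabDensity G := by
    intro m
    induction m with
    | zero => simp
    | succ m ih =>
      rw [pow_succ, ih, Matrix.smul_mul, hsq, smul_smul, pow_succ]
  intro n hn
  obtain ⟨m, rfl⟩ := Nat.exists_eq_add_of_le hn
  rw [add_comm 1 m, hpow m, Matrix.trace_smul, htr, smul_eq_mul, mul_one,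
    ← zpow_natCast ((2:ℂ) ^ ((k : ℤ) - (N : ℤ))), ← zpow_mul]
  congr 1
  push_cast
  ring
end

section
/- Let ψ be a unit vector in the tensor product of two finite-dimensional complex Hilbert spaces (a matrix-indexed vector with index pairs (a,b), a ranging over Fin d₁ and b over Fin d₂), let ρ = ψψ† be the associated pure-state density matrix, and let ρ₁ be its partial trace over the second factor. Then the trace norm of the partial transpose of ρ equals the square of the trace of the positive semidefinite square root of ρ₁: ‖ρ^{T₂}‖₁ = (Tr √ρ₁)². In particular, the partial-transpose negativity of a bipartite pure state equals its Rényi-1/2 entanglement entropy. -/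
open scoped ComplexOrder Matrix

noncomputable section

/-- The positive semidefinite square root, as `Matrix.PosSemidef.sqrt` was defined in the older
Mathlib (removed since). -/
def Matrix.PosSemidef.sqrt {n 𝕜 : Type*} [Fintype n] [DecidableEq n] [RCLike 𝕜]
    {A : Matrix n n 𝕜} (hA : A.PosSemidef) : Matrix n n 𝕜 :=
  hA.1.eigenvectorUnitary.1 * Matrix.diagonal ((↑) ∘ (√·) ∘ hA.1.eigenvalues) *
    (star hA.1.eigenvectorUnitary : Matrix n n 𝕜)

/-- The trace norm `‖M‖₁ = Tr√(MᴴM)` of a complex matrix. -/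
def traceNorm {m n : Type*} [Fintype m] [Fintype n] [DecidableEq n]
    (M : Matrix m n ℂ) : ℝ :=
  ((Matrix.posSemidef_conjTranspose_mul_self M).sqrt).trace.re

open scoped Classical in
/-- The positive semidefinite square root of a positive semidefinite matrix
(junk value `0` on other matrices). -/
def matSqrt {n : Type*} [Fintype n] [DecidableEq n] (M : Matrix n n ℂ) :
    Matrix n n ℂ :=
  if h : M.PosSemidef then h.sqrt else 0

/-- The partial transpose on the second factor:
`M^{T₂}[(a,b),(c,d)] = M[(a,d),(c,b)]`. -/
def ptranspose {m p R : Type*} (M : Matrix (m × p) (m × p) R) :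
    Matrix (m × p) (m × p) R :=
  fun c c' => M (c.1, c'.2) (c'.1, c.2)

/-- The realignment: `R_M[(a,c),(b,d)] = M[(a,b),(c,d)]`. -/
def realign {m p : Type*} (M : Matrix (m × p) (m × p) ℂ) :
    Matrix (m × m) (p × p) ℂ :=
  fun x y => M (x.1, y.1) (x.2, y.2)

/-- The pure-state density matrix `ρ = ψψ†` of a bipartite state vector `ψ`. -/
def pureDensity {d₁ d₂ : ℕ} (ψ : Fin d₁ × Fin d₂ → ℂ) :
    Matrix (Fin d₁ × Fin d₂) (Fin d₁ × Fin d₂) ℂ :=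
  fun i j => ψ i * (starRingEnd ℂ) (ψ j)

/-- The partial trace over the second factor: `ρ₁[a,c] = Σ_b M[(a,b),(c,b)]`. -/
def ptrace2 {d₁ d₂ : ℕ} (M : Matrix (Fin d₁ × Fin d₂) (Fin d₁ × Fin d₂) ℂ) :
    Matrix (Fin d₁) (Fin d₁) ℂ :=
  fun a c => ∑ b, M (a, b) (c, b)

/-- The partial trace over the first factor: `ρ₂[b,d] = Σ_a M[(a,b),(a,d)]`. -/
def ptrace1 {d₁ d₂ : ℕ} (M : Matrix (Fin d₁ × Fin d₂) (Fin d₁ × Fin d₂) ℂ) :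
    Matrix (Fin d₂) (Fin d₂) ℂ :=
  fun b d => ∑ a, M (a, b) (a, d)

end

/-!
Write `ψ` as its coefficient matrix `C`, so that `ρ₁ = C Cᴴ`. A direct computation gives
`(ρ^{T₂})ᴴ ρ^{T₂} = (C Cᴴ) ⊗ (Cᴴ C)`, and the square root of a Kronecker product of positive
matrices is the Kronecker product of the square roots; hence `‖ρ^{T₂}‖₁ = Tr √(C Cᴴ) · Tr √(Cᴴ C)`.
The two factors agree because `Tr f(C Cᴴ) = Tr f(Cᴴ C)` whenever `f 0 = 0`: on the (finite)
spectra `f` coincides with a polynomial `X q`, and `Cᴴ q(C Cᴴ) = q(Cᴴ C) Cᴴ`.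
-/

open Matrix Polynomial
open scoped MatrixOrder Kronecker

namespace Matrix

variable {R S 𝕜 : Type*} [CommRing R] [CommRing S] [Algebra R S] [RCLike 𝕜]
  {m n : Type*} [Fintype m] [Fintype n] [DecidableEq m] [DecidableEq n]

theorem mul_aeval_mul_comm (A : Matrix m n S) (B : Matrix n m S) (p : R[X]) :
    A * aeval (B * A) p = aeval (A * B) p * A := by
  have hpow (k : ℕ) : A * (B * A) ^ k = (A * B) ^ k * A := by
    induction k with
    | zero => simp
    | succ k ih => rw [pow_succ, pow_succ, ← Matrix.mul_assoc, ih]; simp only [Matrix.mul_assoc]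
  induction p using Polynomial.induction_on' with
  | add p q hp hq => simp only [map_add, Matrix.mul_add, Matrix.add_mul, hp, hq]
  | monomial k a =>
    simp only [aeval_monomial, ← Algebra.smul_def, Matrix.mul_smul, Matrix.smul_mul, hpow]

theorem trace_aeval_mul_comm (A : Matrix m n S) (B : Matrix n m S) {p : R[X]}
    (hp : p.eval 0 = 0) : (aeval (A * B) p).trace = (aeval (B * A) p).trace := by
  obtain ⟨q, rfl⟩ : X ∣ p := X_dvd_iff.mpr (by rwa [coeff_zero_eq_eval_zero])
  calc (aeval (A * B) (X * q)).trace = (B * aeval (A * B) q * A).trace := by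
        rw [map_mul, aeval_X, Matrix.mul_assoc, trace_mul_comm, Matrix.mul_assoc]
    _ = (aeval (B * A) (X * q)).trace := by
        rw [mul_aeval_mul_comm, Matrix.mul_assoc, trace_mul_comm, map_mul, aeval_X]

theorem trace_cfc_mul_conjTranspose_comm (A : Matrix m n 𝕜) {f : ℝ → ℝ} (hf : f 0 = 0) :
    (cfc f (A * Aᴴ)).trace = (cfc f (Aᴴ * A)).trace := by
  classical
  let s : Finset ℝ := insert 0 ((A * Aᴴ).finite_real_spectrum.toFinset ∪
    (Aᴴ * A).finite_real_spectrum.toFinset)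
  obtain ⟨p, hp⟩ : ∃ p : ℝ[X], ∀ x ∈ s, p.eval x = f x :=
    ⟨Lagrange.interpolate s id f, fun x hx ↦
      Lagrange.eval_interpolate_at_node f (Set.injOn_id _) hx⟩
  have hEqOn₁ : (spectrum ℝ (A * Aᴴ)).EqOn f p.eval := fun x hx ↦ (hp x (by simp [s, hx])).symm
  have hEqOn₂ : (spectrum ℝ (Aᴴ * A)).EqOn f p.eval := fun x hx ↦ (hp x (by simp [s, hx])).symm
  rw [cfc_congr hEqOn₁, cfc_congr hEqOn₂,
    cfc_polynomial p (A * Aᴴ) (isHermitian_mul_conjTranspose_self A).isSelfAdjoint,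
    cfc_polynomial p (Aᴴ * A) (isHermitian_conjTranspose_mul_self A).isSelfAdjoint,
    trace_aeval_mul_comm A Aᴴ ((hp 0 (Finset.mem_insert_self _ _)).trans hf)]

theorem PosSemidef.sqrt_eq_cfcSqrt {A : Matrix n n 𝕜} (hA : A.PosSemidef) :
    hA.sqrt = CFC.sqrt A := by
  rw [CFC.sqrt_eq_real_sqrt A hA.nonneg, cfcₙ_eq_cfc, hA.1.cfc_eq]
  rfl

theorem trace_sqrt_mul_conjTranspose_comm (A : Matrix m n 𝕜) :
    (CFC.sqrt (A * Aᴴ)).trace = (CFC.sqrt (Aᴴ * A)).trace := by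
  rw [CFC.sqrt_eq_real_sqrt _ (posSemidef_self_mul_conjTranspose A).nonneg,
    CFC.sqrt_eq_real_sqrt _ (posSemidef_conjTranspose_mul_self A).nonneg, cfcₙ_eq_cfc,
    cfcₙ_eq_cfc]
  exact trace_cfc_mul_conjTranspose_comm A Real.sqrt_zero

end Matrix

theorem CFC.sqrt_kronecker {𝕜 m n : Type*} [RCLike 𝕜] [Fintype m] [Fintype n] [DecidableEq m]
    [DecidableEq n] {P : Matrix m m 𝕜} {Q : Matrix n n 𝕜} (hP : 0 ≤ P) (hQ : 0 ≤ Q) :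
    CFC.sqrt (P ⊗ₖ Q) = CFC.sqrt P ⊗ₖ CFC.sqrt Q := by
  refine CFC.sqrt_unique ?_ ?_
  · rw [← mul_kronecker_mul, CFC.sqrt_mul_sqrt_self P, CFC.sqrt_mul_sqrt_self Q]
  · exact ((nonneg_iff_posSemidef.mp (CFC.sqrt_nonneg P)).kronecker
      (nonneg_iff_posSemidef.mp (CFC.sqrt_nonneg Q))).nonneg

theorem traceNorm_eq_re_trace_sqrt {m n : Type*} [Fintype m] [Fintype n] [DecidableEq n]
    (M : Matrix m n ℂ) : traceNorm M = (CFC.sqrt (Mᴴ * M)).trace.re := by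
  rw [traceNorm, PosSemidef.sqrt_eq_cfcSqrt]

theorem matSqrt_eq_sqrt {n : Type*} [Fintype n] [DecidableEq n] {M : Matrix n n ℂ}
    (hM : M.PosSemidef) : matSqrt M = CFC.sqrt M := by
  rw [matSqrt, dif_pos hM, hM.sqrt_eq_cfcSqrt]

def coeffMatrix {d₁ d₂ : ℕ} (ψ : Fin d₁ × Fin d₂ → ℂ) : Matrix (Fin d₁) (Fin d₂) ℂ :=
  of (Function.curry ψ)

section PureState

variable {d₁ d₂ : ℕ} (ψ : Fin d₁ × Fin d₂ → ℂ)

theorem ptrace2_pureDensity :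
    ptrace2 (pureDensity ψ) = coeffMatrix ψ * (coeffMatrix ψ)ᴴ := by
  ext a c
  simp [ptrace2, pureDensity, coeffMatrix, mul_apply]

theorem conjTranspose_ptranspose_pureDensity_mul_self :
    (ptranspose (pureDensity ψ))ᴴ * ptranspose (pureDensity ψ) =
      (coeffMatrix ψ * (coeffMatrix ψ)ᴴ) ⊗ₖ ((coeffMatrix ψ)ᴴ * coeffMatrix ψ) := by
  ext ⟨a, b⟩ ⟨e, f⟩
  simp only [mul_apply, conjTranspose_apply, ptranspose, pureDensity, kroneckerMap_apply,
    coeffMatrix, of_apply, Function.curry_apply, Fintype.sum_prod_type, star_mul', RCLike.star_def,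
    Complex.conj_conj]
  rw [Finset.sum_mul_sum, Finset.sum_comm]
  refine Finset.sum_congr rfl fun c _ ↦ Finset.sum_congr rfl fun d _ ↦ ?_
  ring

end PureState

theorem traceNorm_ptranspose_pure_general {d₁ d₂ : ℕ} (ψ : Fin d₁ × Fin d₂ → ℂ) :
    (traceNorm (ptranspose (pureDensity ψ)) : ℂ) =
      (matSqrt (ptrace2 (pureDensity ψ))).trace ^ 2 := by
  set C := coeffMatrix ψ
  have hP : (C * Cᴴ).PosSemidef := posSemidef_self_mul_conjTranspose C
  have hQ : (Cᴴ * C).PosSemidef := posSemidef_conjTranspose_mul_self C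
  obtain ⟨t, -, ht⟩ := RCLike.nonneg_iff_exists_ofReal.mp
    (nonneg_iff_posSemidef.mp (CFC.sqrt_nonneg (C * Cᴴ))).trace_nonneg
  rw [traceNorm_eq_re_trace_sqrt, conjTranspose_ptranspose_pureDensity_mul_self,
    CFC.sqrt_kronecker hP.nonneg hQ.nonneg, trace_kronecker,
    ← trace_sqrt_mul_conjTranspose_comm, ptrace2_pureDensity, matSqrt_eq_sqrt hP, ← ht]
  simp [sq]

/-- For a bipartite pure state `ρ = ψψ†`, the trace norm of the partial transpose
equals `(Tr √ρ₁)²`: the PT negativity of a pure state is its Rényi-1/2 entanglement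
entropy. -/
theorem traceNorm_ptranspose_pure {d₁ d₂ : ℕ} (ψ : Fin d₁ × Fin d₂ → ℂ)
    (hψ : ∑ i, Complex.normSq (ψ i) = 1) :
    (traceNorm (ptranspose (pureDensity ψ)) : ℂ) =
      (matSqrt (ptrace2 (pureDensity ψ))).trace ^ 2 :=
  traceNorm_ptranspose_pure_general ψ
end
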